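/- Assume all corner concentration values of all cells are strictly positive, z₁ ≥ 0, and that for every cell K_{ij} and every (β,γ) ∈ {1,2}²: 6Δt·z₁·max{P^{βγ}_{ij}, 0} ≤ 1; if q^{βγ}_{ij} ≥ 0 then c̃^{βγ}_{ij} ≥ 0; and if q^{βγ}_{ij} < 0 then c̃^{βγ}_{ij} = c(x_i^β, y_j^γ) and 6Δt(−q^{βγ}_{ij}) < Φ^m_{ij}, the minimum of Φ over the four corners of K_{ij}. Then the source part H^s_{ij} := r̄_{ij}/3 + Δt·∑_{β,γ} w_β w_γ (c̃^{βγ}_{ij}·q^{βγ}_{ij} − z₁·r(x_i^β, y_j^γ)·P^{βγ}_{ij}) is strictly positive for every cell. -/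

import Mathlib

noncomputable section

namespace DG2D

/-- Gauss constant `μ₁ = (3+√3)/6`. -/
def mu1 : ℝ := (3 + Real.sqrt 3) / 6

/-- Gauss constant `μ₂ = (3-√3)/6`. -/
def mu2 : ℝ := (3 - Real.sqrt 3) / 6

/-- Value at the Gauss point `β` of an edge, from the two endpoint (corner) values:
`β = 1` gives `μ₁·a + μ₂·b`, `β = 2` gives `μ₂·a + μ₁·b`. -/
def ga (β : Fin 2) (a b : ℝ) : ℝ := if β = 0 then mu1 * a + mu2 * b else mu2 * a + mu1 * b

/-- Cell average `r̄_{ij} = (1/4)·∑ cΦ` over the four corners of `K_{ij}`.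
`Φ i j` denotes the corner value `Φ_{i+1/2,j+1/2}`; `c00 i j`, `c10 i j`, `c01 i j`,
`c11 i j` denote the corner values of `c` in cell `K_{ij}` at the corners
`(i-1/2,j-1/2)`, `(i+1/2,j-1/2)`, `(i-1/2,j+1/2)`, `(i+1/2,j+1/2)` respectively. -/
def rbar (Φ c00 c10 c01 c11 : ℕ → ℕ → ℝ) (i j : ℕ) : ℝ :=
  (c00 i j * Φ (i - 1) (j - 1) + c10 i j * Φ i (j - 1)
    + c01 i j * Φ (i - 1) j + c11 i j * Φ i j) / 4

/-- Trace `c⁻` (from `K_{ij}`) at Gauss point `β` of the vertical edge `x_{i+1/2}`, row `j`. -/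
def cmV (c10 c11 : ℕ → ℕ → ℝ) (i j : ℕ) (β : Fin 2) : ℝ := ga β (c10 i j) (c11 i j)

/-- Trace `c⁺` (from `K_{i+1,j}`) at Gauss point `β` of the vertical edge `x_{i+1/2}`, row `j`. -/
def cpV (c00 c01 : ℕ → ℕ → ℝ) (i j : ℕ) (β : Fin 2) : ℝ := ga β (c00 (i + 1) j) (c01 (i + 1) j)

/-- Trace `c⁻` (from `K_{ij}`) at Gauss point `β` of the horizontal edge `y_{j+1/2}`, column `i`. -/
def cmH (c01 c11 : ℕ → ℕ → ℝ) (i j : ℕ) (β : Fin 2) : ℝ := ga β (c01 i j) (c11 i j)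

/-- Trace `c⁺` (from `K_{i,j+1}`) at Gauss point `β` of the horizontal edge `y_{j+1/2}`. -/
def cpH (c00 c10 : ℕ → ℕ → ℝ) (i j : ℕ) (β : Fin 2) : ℝ := ga β (c00 i (j + 1)) (c10 i (j + 1))

/-- Jump `[c] = c⁺ - c⁻` at a vertical-edge Gauss point. -/
def jumpV (c00 c10 c01 c11 : ℕ → ℕ → ℝ) (i j : ℕ) (β : Fin 2) : ℝ :=
  cpV c00 c01 i j β - cmV c10 c11 i j β

/-- Jump `[c] = c⁺ - c⁻` at a horizontal-edge Gauss point. -/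
def jumpH (c00 c10 c01 c11 : ℕ → ℕ → ℝ) (i j : ℕ) (β : Fin 2) : ℝ :=
  cpH c00 c10 i j β - cmH c01 c11 i j β

/-- Convective flux `û₁c = u₁⁺·c⁺ - α·[c]` at vertical-edge Gauss points. -/
def uc1 (u1 : ℕ → ℕ → Fin 2 → ℝ) (c00 c10 c01 c11 : ℕ → ℕ → ℝ) (α : ℝ)
    (i j : ℕ) (β : Fin 2) : ℝ :=
  u1 i j β * cpV c00 c01 i j β - α * (cpV c00 c01 i j β - cmV c10 c11 i j β)

/-- Convective flux `û₂c = u₂⁺·c⁺ - α·[c]` at horizontal-edge Gauss points. -/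
def uc2 (u2 : ℕ → ℕ → Fin 2 → ℝ) (c00 c10 c01 c11 : ℕ → ℕ → ℝ) (α : ℝ)
    (i j : ℕ) (β : Fin 2) : ℝ :=
  u2 i j β * cpH c00 c10 i j β - α * (cpH c00 c10 i j β - cmH c01 c11 i j β)

/-- Convection part `H^c_{ij}`. -/
def Hc (u1 u2 : ℕ → ℕ → Fin 2 → ℝ) (Φ c00 c10 c01 c11 : ℕ → ℕ → ℝ) (α Δx Δy Δt : ℝ)
    (i j : ℕ) : ℝ :=
  rbar Φ c00 c10 c01 c11 i j / 3
    + (Δt / Δx) * ∑ β : Fin 2, (1 / 2 : ℝ) *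
        (uc1 u1 c00 c10 c01 c11 α (i - 1) j β - uc1 u1 c00 c10 c01 c11 α i j β)
    + (Δt / Δy) * ∑ β : Fin 2, (1 / 2 : ℝ) *
        (uc2 u2 c00 c10 c01 c11 α i (j - 1) β - uc2 u2 c00 c10 c01 c11 α i j β)

/-- Derivative trace `(c_x)⁻` at a vertical-edge Gauss point:
`(c_x)⁻_{i+1/2,β} = (c⁻_{i+1/2,β} - c⁺_{i-1/2,β})/Δx`. -/
def cxmV (c00 c10 c01 c11 : ℕ → ℕ → ℝ) (Δx : ℝ) (i j : ℕ) (β : Fin 2) : ℝ :=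
  (cmV c10 c11 i j β - cpV c00 c01 (i - 1) j β) / Δx

/-- Derivative trace `(c_x)⁺` at a vertical-edge Gauss point:
`(c_x)⁺_{i+1/2,β} = (c⁻_{i+3/2,β} - c⁺_{i+1/2,β})/Δx`. -/
def cxpV (c00 c10 c01 c11 : ℕ → ℕ → ℝ) (Δx : ℝ) (i j : ℕ) (β : Fin 2) : ℝ :=
  (cmV c10 c11 (i + 1) j β - cpV c00 c01 i j β) / Δx

/-- Tangential derivative trace `(c_y)⁻` on a vertical edge:
`(√3/Δy)·(c⁻_{i+1/2,2} - c⁻_{i+1/2,1})` (the same for both Gauss points). -/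
def cymV (c10 c11 : ℕ → ℕ → ℝ) (Δy : ℝ) (i j : ℕ) : ℝ :=
  (Real.sqrt 3 / Δy) * (cmV c10 c11 i j 1 - cmV c10 c11 i j 0)

/-- Tangential derivative trace `(c_y)⁺` on a vertical edge. -/
def cypV (c00 c01 : ℕ → ℕ → ℝ) (Δy : ℝ) (i j : ℕ) : ℝ :=
  (Real.sqrt 3 / Δy) * (cpV c00 c01 i j 1 - cpV c00 c01 i j 0)

/-- Average `{D₁₁c_x + D₁₂c_y}` at a vertical-edge Gauss point. -/
def GxV (D11m D11p D12m D12p : ℕ → ℕ → Fin 2 → ℝ) (c00 c10 c01 c11 : ℕ → ℕ → ℝ)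
    (Δx Δy : ℝ) (i j : ℕ) (β : Fin 2) : ℝ :=
  (D11m i j β * cxmV c00 c10 c01 c11 Δx i j β + D12m i j β * cymV c10 c11 Δy i j
    + D11p i j β * cxpV c00 c10 c01 c11 Δx i j β + D12p i j β * cypV c00 c01 Δy i j) / 2

/-- x-diffusion part `H^d_x`. -/
def Hdx (D11m D11p D12m D12p : ℕ → ℕ → Fin 2 → ℝ) (Φ c00 c10 c01 c11 : ℕ → ℕ → ℝ)
    (αt Δx Δy Δt : ℝ) (i j : ℕ) : ℝ :=
  rbar Φ c00 c10 c01 c11 i j / 6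
    - (Δt / Δx) * ∑ β : Fin 2, (1 / 2 : ℝ) *
        ((GxV D11m D11p D12m D12p c00 c10 c01 c11 Δx Δy (i - 1) j β
            + (αt / Δy) * jumpV c00 c10 c01 c11 (i - 1) j β)
          - (GxV D11m D11p D12m D12p c00 c10 c01 c11 Δx Δy i j β
            + (αt / Δy) * jumpV c00 c10 c01 c11 i j β))

/-- Derivative trace `(c_y)⁻` at a horizontal-edge Gauss point. -/
def cymH (c00 c10 c01 c11 : ℕ → ℕ → ℝ) (Δy : ℝ) (i j : ℕ) (β : Fin 2) : ℝ :=
  (cmH c01 c11 i j β - cpH c00 c10 i (j - 1) β) / Δy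

/-- Derivative trace `(c_y)⁺` at a horizontal-edge Gauss point. -/
def cypH (c00 c10 c01 c11 : ℕ → ℕ → ℝ) (Δy : ℝ) (i j : ℕ) (β : Fin 2) : ℝ :=
  (cmH c01 c11 i (j + 1) β - cpH c00 c10 i j β) / Δy

/-- Tangential derivative trace `(c_x)⁻` on a horizontal edge. -/
def cxmH (c01 c11 : ℕ → ℕ → ℝ) (Δx : ℝ) (i j : ℕ) : ℝ :=
  (Real.sqrt 3 / Δx) * (cmH c01 c11 i j 1 - cmH c01 c11 i j 0)

/-- Tangential derivative trace `(c_x)⁺` on a horizontal edge. -/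
def cxpH (c00 c10 : ℕ → ℕ → ℝ) (Δx : ℝ) (i j : ℕ) : ℝ :=
  (Real.sqrt 3 / Δx) * (cpH c00 c10 i j 1 - cpH c00 c10 i j 0)

/-- Average `{D₂₁c_x + D₂₂c_y}` at a horizontal-edge Gauss point. -/
def GyH (D21m D21p D22m D22p : ℕ → ℕ → Fin 2 → ℝ) (c00 c10 c01 c11 : ℕ → ℕ → ℝ)
    (Δx Δy : ℝ) (i j : ℕ) (β : Fin 2) : ℝ :=
  (D21m i j β * cxmH c01 c11 Δx i j + D22m i j β * cymH c00 c10 c01 c11 Δy i j β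
    + D21p i j β * cxpH c00 c10 Δx i j + D22p i j β * cypH c00 c10 c01 c11 Δy i j β) / 2

/-- y-diffusion part `H^d_y`. -/
def Hdy (D21m D21p D22m D22p : ℕ → ℕ → Fin 2 → ℝ) (Φ c00 c10 c01 c11 : ℕ → ℕ → ℝ)
    (αt Δx Δy Δt : ℝ) (i j : ℕ) : ℝ :=
  rbar Φ c00 c10 c01 c11 i j / 6
    - (Δt / Δy) * ∑ β : Fin 2, (1 / 2 : ℝ) *
        ((GyH D21m D21p D22m D22p c00 c10 c01 c11 Δx Δy i (j - 1) β
            + (αt / Δx) * jumpH c00 c10 c01 c11 i (j - 1) β)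
          - (GyH D21m D21p D22m D22p c00 c10 c01 c11 Δx Δy i j β
            + (αt / Δx) * jumpH c00 c10 c01 c11 i j β))

/-- Value of the bilinear function `c` at the interior Gauss point `(β,γ)` of cell `K_{ij}`. -/
def cGP (c00 c10 c01 c11 : ℕ → ℕ → ℝ) (i j : ℕ) (β γ : Fin 2) : ℝ :=
  ga β (ga γ (c00 i j) (c01 i j)) (ga γ (c10 i j) (c11 i j))

/-- Value of the bilinear function `r = cΦ` at the interior Gauss point `(β,γ)` of `K_{ij}`. -/
def rGP (Φ c00 c10 c01 c11 : ℕ → ℕ → ℝ) (i j : ℕ) (β γ : Fin 2) : ℝ :=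
  ga β (ga γ (c00 i j * Φ (i - 1) (j - 1)) (c01 i j * Φ (i - 1) j))
    (ga γ (c10 i j * Φ i (j - 1)) (c11 i j * Φ i j))

/-- Value of the bilinear interpolant of `Φ` at the interior Gauss point `(β,γ)` of `K_{ij}`. -/
def phiGP (Φ : ℕ → ℕ → ℝ) (i j : ℕ) (β γ : Fin 2) : ℝ :=
  ga β (ga γ (Φ (i - 1) (j - 1)) (Φ (i - 1) j)) (ga γ (Φ i (j - 1)) (Φ i j))

/-- Source part `H^s_{ij}`. -/
def Hs (Φ c00 c10 c01 c11 : ℕ → ℕ → ℝ) (q ct P : ℕ → ℕ → Fin 2 → Fin 2 → ℝ)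
    (z1 Δt : ℝ) (i j : ℕ) : ℝ :=
  rbar Φ c00 c10 c01 c11 i j / 3
    + Δt * ∑ β : Fin 2, ∑ γ : Fin 2, (1 / 2 : ℝ) * (1 / 2 : ℝ) *
        (ct i j β γ * q i j β γ - z1 * rGP Φ c00 c10 c01 c11 i j β γ * P i j β γ)

/-- The Euler-forward cell-average update `r̄^{new}_{ij} = H^c + H^d_x + H^d_y + H^s`. -/
def rbarnew (u1 u2 D11m D11p D12m D12p D21m D21p D22m D22p : ℕ → ℕ → Fin 2 → ℝ)
    (Φ c00 c10 c01 c11 : ℕ → ℕ → ℝ) (q ct P : ℕ → ℕ → Fin 2 → Fin 2 → ℝ)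
    (α αt z1 Δx Δy Δt : ℝ) (i j : ℕ) : ℝ :=
  Hc u1 u2 Φ c00 c10 c01 c11 α Δx Δy Δt i j
    + Hdx D11m D11p D12m D12p Φ c00 c10 c01 c11 αt Δx Δy Δt i j
    + Hdy D21m D21p D22m D22p Φ c00 c10 c01 c11 αt Δx Δy Δt i j
    + Hs Φ c00 c10 c01 c11 q ct P z1 Δt i j

/-!
The two-point Gauss rule is exact for the bilinear `r = cΦ` (because `μ₁ + μ₂ = 1`), so `r̄/3`
is the average of `r/3` over the four interior Gauss points and `H^s` is the average of the
pointwise quantities `r/3 + Δt (c̃ q - z₁ r P)`. Each of these is positive: the time-step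
restriction bounds the pressure term by `r/6`; an injection term (`q ≥ 0`) is nonnegative; an
extraction term is `-Δt (-q) c` with `6 Δt (-q) c < Φ^m c ≤ r`, so it costs less than `r/6`.
-/

lemma mu1_pos : 0 < mu1 := by
  unfold mu1; positivity

lemma mu2_pos : 0 < mu2 := by
  have : Real.sqrt 3 < 3 := by
    rw [Real.sqrt_lt' (by norm_num)]; norm_num
  unfold mu2; linarith

lemma mu1_add_mu2 : mu1 + mu2 = 1 := by
  unfold mu1 mu2; ring

lemma ga_pos (β : Fin 2) {a b : ℝ} (ha : 0 < a) (hb : 0 < b) : 0 < ga β a b := by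
  have := mu1_pos; have := mu2_pos
  unfold ga; split_ifs <;> positivity

lemma ga_mono (β : Fin 2) {a a' b b' : ℝ} (ha : a' ≤ a) (hb : b' ≤ b) :
    ga β a' b' ≤ ga β a b := by
  have := mu1_pos.le; have := mu2_pos.le
  unfold ga; split_ifs <;> gcongr

lemma ga_mul_left (β : Fin 2) (k a b : ℝ) : ga β (k * a) (k * b) = k * ga β a b := by
  unfold ga; split_ifs <;> ring

lemma sum_ga (a b : ℝ) : ∑ β : Fin 2, ga β a b = a + b := by
  simp only [Fin.sum_univ_two, ga, if_true, if_neg (by decide : (1 : Fin 2) ≠ 0)]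
  linear_combination (a + b) * mu1_add_mu2

lemma gaussPoint_source_pos {r c ct q P m z1 Δt : ℝ} (hr : 0 < r) (hc : 0 < c) (hm : m * c ≤ r)
    (hΔt : 0 ≤ Δt) (hz1 : 0 ≤ z1) (hP : 6 * Δt * z1 * max P 0 ≤ 1)
    (hq1 : 0 ≤ q → 0 ≤ ct) (hq2 : q < 0 → ct = c ∧ 6 * Δt * (-q) < m) :
    0 < r / 3 + Δt * (ct * q - z1 * r * P) := by
  have hpressure : Δt * (z1 * r * P) ≤ r / 6 :=
    calc Δt * (z1 * r * P) ≤ 6 * Δt * z1 * max P 0 * r / 6 := by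
          have := mul_nonneg hΔt hz1
          nlinarith [mul_le_mul_of_nonneg_left (le_max_left P 0) (mul_nonneg this hr.le)]
      _ ≤ r / 6 := by nlinarith
  rcases lt_or_ge q 0 with hq | hq
  · obtain ⟨rfl, hqm⟩ := hq2 hq
    have := mul_lt_mul_of_pos_right hqm hc
    linarith
  · have := mul_nonneg (mul_nonneg hΔt (hq1 hq)) hq
    linarith

section Cell

variable (Φ c00 c10 c01 c11 : ℕ → ℕ → ℝ) (i j : ℕ)

def phiMin : ℝ := min (min (Φ (i - 1) (j - 1)) (Φ i (j - 1))) (min (Φ (i - 1) j) (Φ i j))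

lemma phiMin_mul_cGP_le_rGP (h00 : 0 ≤ c00 i j) (h10 : 0 ≤ c10 i j) (h01 : 0 ≤ c01 i j)
    (h11 : 0 ≤ c11 i j) (β γ : Fin 2) :
    phiMin Φ i j * cGP c00 c10 c01 c11 i j β γ ≤ rGP Φ c00 c10 c01 c11 i j β γ := by
  have corner {c φ : ℝ} (hc : 0 ≤ c) (hφ : phiMin Φ i j ≤ φ) : phiMin Φ i j * c ≤ c * φ := by
    rw [mul_comm]; exact mul_le_mul_of_nonneg_left hφ hc
  unfold cGP rGP
  rw [← ga_mul_left, ← ga_mul_left, ← ga_mul_left]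
  exact ga_mono _
    (ga_mono _ (corner h00 ((min_le_left _ _).trans (min_le_left _ _)))
      (corner h01 ((min_le_right _ _).trans (min_le_left _ _))))
    (ga_mono _ (corner h10 ((min_le_left _ _).trans (min_le_right _ _)))
      (corner h11 ((min_le_right _ _).trans (min_le_right _ _))))

lemma cGP_pos (h00 : 0 < c00 i j) (h10 : 0 < c10 i j) (h01 : 0 < c01 i j) (h11 : 0 < c11 i j)
    (β γ : Fin 2) : 0 < cGP c00 c10 c01 c11 i j β γ :=
  ga_pos _ (ga_pos _ h00 h01) (ga_pos _ h10 h11)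

lemma rbar_eq_sum_rGP :
    rbar Φ c00 c10 c01 c11 i j = (∑ β : Fin 2, ∑ γ : Fin 2, rGP Φ c00 c10 c01 c11 i j β γ) / 4 := by
  simp only [rGP]
  rw [Finset.sum_comm]
  simp only [sum_ga, Finset.sum_add_distrib]
  rw [rbar]; ring

lemma Hs_eq_sum (q ct P : ℕ → ℕ → Fin 2 → Fin 2 → ℝ) (z1 Δt : ℝ) :
    Hs Φ c00 c10 c01 c11 q ct P z1 Δt i j = (∑ β : Fin 2, ∑ γ : Fin 2,
      (rGP Φ c00 c10 c01 c11 i j β γ / 3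
        + Δt * (ct i j β γ * q i j β γ - z1 * rGP Φ c00 c10 c01 c11 i j β γ * P i j β γ))) / 4 := by
  rw [Hs, rbar_eq_sum_rGP]
  simp only [Fin.sum_univ_two]
  ring

end Cell

theorem source_part_positive_2d
    (Nx Ny : ℕ) (Δt : ℝ)
    (hΔt : 0 < Δt)
    (Φ c00 c10 c01 c11 : ℕ → ℕ → ℝ) (q ct P : ℕ → ℕ → Fin 2 → Fin 2 → ℝ) (z1 : ℝ)
    (hΦ : ∀ i j, i ≤ Nx → j ≤ Ny → 0 < Φ i j)
    -- all corner concentration values of all cells strictly positive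
    (hc : ∀ i j, 1 ≤ i → i ≤ Nx → 1 ≤ j → j ≤ Ny →
      0 < c00 i j ∧ 0 < c10 i j ∧ 0 < c01 i j ∧ 0 < c11 i j)
    (hz1 : 0 ≤ z1)
    (hP : ∀ i j, 1 ≤ i → i ≤ Nx → 1 ≤ j → j ≤ Ny → ∀ β γ : Fin 2,
      6 * Δt * z1 * max (P i j β γ) 0 ≤ 1)
    (hq1 : ∀ i j, 1 ≤ i → i ≤ Nx → 1 ≤ j → j ≤ Ny → ∀ β γ : Fin 2,
      0 ≤ q i j β γ → 0 ≤ ct i j β γ)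
    (hq2 : ∀ i j, 1 ≤ i → i ≤ Nx → 1 ≤ j → j ≤ Ny → ∀ β γ : Fin 2,
      q i j β γ < 0 →
        ct i j β γ = cGP c00 c10 c01 c11 i j β γ ∧
        6 * Δt * (-q i j β γ)
          < min (min (Φ (i - 1) (j - 1)) (Φ i (j - 1))) (min (Φ (i - 1) j) (Φ i j))) :
    ∀ i j, 1 ≤ i → i ≤ Nx → 1 ≤ j → j ≤ Ny →
      0 < Hs Φ c00 c10 c01 c11 q ct P z1 Δt i j := by
  intro i j hi1 hi2 hj1 hj2
  obtain ⟨h00, h10, h01, h11⟩ := hc i j hi1 hi2 hj1 hj2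
  have hΦm : 0 < phiMin Φ i j :=
    lt_min (lt_min (hΦ _ _ (by omega) (by omega)) (hΦ _ _ hi2 (by omega)))
      (lt_min (hΦ _ _ (by omega) hj2) (hΦ _ _ hi2 hj2))
  rw [Hs_eq_sum]
  refine div_pos (Finset.sum_pos (fun β _ ↦ Finset.sum_pos (fun γ _ ↦ ?_)
    Finset.univ_nonempty) Finset.univ_nonempty) four_pos
  have hcGP := cGP_pos c00 c10 c01 c11 i j h00 h10 h01 h11 β γ
  have hrGP := phiMin_mul_cGP_le_rGP Φ c00 c10 c01 c11 i j h00.le h10.le h01.le h11.le β γ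
  exact gaussPoint_source_pos ((mul_pos hΦm hcGP).trans_le hrGP) hcGP hrGP hΔt.le hz1
    (hP i j hi1 hi2 hj1 hj2 β γ) (hq1 i j hi1 hi2 hj1 hj2 β γ) (hq2 i j hi1 hi2 hj1 hj2 β γ)

end DG2D
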